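/- For all N ≥ 2, all k ∈ {1,…,N−1}, all p ∈ (1/2,1) and all ζ ≤ ζ' in Ω_{N,k}, one has (f^{(0)}_{N,k}(ζ') − f^{(0)}_{N,k}(ζ))·λ^{(N−k)/2} ≤ N·k·λ^{D_N(ζ')}, where D_N(ζ) := max(|L_N(ζ) − (N−k)|, |R_N(ζ) − (N−k)|), with L_N(ζ) = max{x : ζ(x) = −x} and R_N(ζ) = min{x : ζ(x) = x − 2(N−k)}. -/

import Mathlib

open Filter
open scoped Classical BigOperators Topology

namespace Wasep

/-- Particle configurations on a segment of length `N`
(site `x` of the paper, `x ∈ {1,…,N}`, is index `x-1 : Fin N`). -/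
abbrev Conf (N : ℕ) := Fin N → Bool

/-- Number of particles of a configuration. -/
def numParticles {N : ℕ} (ξ : Conf N) : ℕ :=
  (Finset.univ.filter fun x => ξ x = true).card

/-- The left site of the bond `y` (the paper's site `y`, for `y ∈ {1,…,N-1}`). -/
def siteA {N : ℕ} (y : Fin (N - 1)) : Fin N := ⟨y.1, by have := y.isLt; omega⟩

/-- The right site of the bond `y` (the paper's site `y+1`, for `y ∈ {1,…,N-1}`). -/
def siteB {N : ℕ} (y : Fin (N - 1)) : Fin N := ⟨y.1 + 1, by have := y.isLt; omega⟩

/-- Jump rate of the bond `y` in configuration `ξ`: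
`q·1_{ξ(y)<ξ(y+1)} + p·1_{ξ(y)>ξ(y+1)}` with `q = 1-p`. -/
noncomputable def rate {N : ℕ} (p : ℝ) (ξ : Conf N) (y : Fin (N - 1)) : ℝ :=
  (if ξ (siteA y) = false ∧ ξ (siteB y) = true then 1 - p else 0) +
    (if ξ (siteA y) = true ∧ ξ (siteB y) = false then p else 0)

/-- The configuration `ξ^y`, with the contents of sites `y` and `y+1` swapped. -/
def swapBond {N : ℕ} (ξ : Conf N) (y : Fin (N - 1)) : Conf N :=
  ξ ∘ Equiv.swap (siteA y) (siteB y)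

/-- The ASEP generator acting on functions:
`(L f)(ξ) = Σ_{y=1}^{N-1} (q·1_{ξ(y)<ξ(y+1)} + p·1_{ξ(y)>ξ(y+1)})(f(ξ^y) − f(ξ))`. -/
noncomputable def gen (N : ℕ) (p : ℝ) (f : Conf N → ℝ) (ξ : Conf N) : ℝ :=
  ∑ y : Fin (N - 1), rate p ξ y * (f (swapBond ξ y) - f ξ)

/-- The ASEP generator, as a matrix:  `(L f)(ξ) = Σ_{ξ'} genM(ξ,ξ') f(ξ')`. -/
noncomputable def genM (N : ℕ) (p : ℝ) : Matrix (Conf N) (Conf N) ℝ := fun ξ ξ' =>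
  ∑ y : Fin (N - 1),
    rate p ξ y * ((if ξ' = swapBond ξ y then (1 : ℝ) else 0) - (if ξ' = ξ then (1 : ℝ) else 0))

/-- The semigroup `P_t = exp (t L)`; `Pt N p t ξ ξ'` is the transition
probability from `ξ` to `ξ'` in time `t`. -/
noncomputable def Pt (N : ℕ) (p t : ℝ) (ξ ξ' : Conf N) : ℝ :=
  (NormedSpace.exp (t • LinearMap.toContinuousLinearMap (Matrix.toLin' (genM N p))))
    (fun η => if η = ξ' then (1 : ℝ) else 0) ξ

/-- `λ = p / q`. -/
noncomputable def lam (p : ℝ) : ℝ := p / (1 - p)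

/-- The bias `b = p - q`. -/
def bias (p : ℝ) : ℝ := p - (1 - p)

/-- The increasing list of (1-based) particle positions `ξ_1 < ξ_2 < … < ξ_k`. -/
def particlePos {N : ℕ} (ξ : Conf N) : List ℕ :=
  ((Finset.univ.filter fun x => ξ x = true).sort (· ≤ ·)).map fun x => (x : ℕ) + 1

/-- `A(ξ) = Σ_{i=1}^k (N − k + i − ξ_i)`. -/
def Astat (N k : ℕ) {M : ℕ} (ξ : Conf M) : ℤ :=
  ∑ i ∈ Finset.range k, ((N : ℤ) - k + (i + 1) - ((particlePos ξ).getD i 0 : ℤ))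

/-- The partition function `Z_{N,k} = Σ_{ξ ∈ Ω⁰_{N,k}} λ^{−A(ξ)}`. -/
noncomputable def Zpart (N k : ℕ) (p : ℝ) : ℝ :=
  ∑ ξ ∈ Finset.univ.filter (fun ξ : Conf N => numParticles ξ = k), lam p ^ (-Astat N k ξ)

/-- The invariant measure `π_{N,k}(ξ) = λ^{−A(ξ)}/Z_{N,k}`,
extended by `0` outside of the `k`-particle sector. -/
noncomputable def statMeas (N k : ℕ) (p : ℝ) (ξ : Conf N) : ℝ :=
  if numParticles ξ = k then lam p ^ (-Astat N k ξ) / Zpart N k p else 0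

/-- Total variation distance `‖μ − ν‖_TV = sup_A (μ(A) − ν(A))` on a finite space. -/
noncomputable def tvDist {S : Type*} [Fintype S] (μ ν : S → ℝ) : ℝ :=
  ⨆ A : Finset S, (∑ x ∈ A, μ x - ∑ x ∈ A, ν x)

/-- `d^{N,k}(t) = max_{ξ ∈ Ω⁰_{N,k}} ‖P_t(ξ,·) − π_{N,k}‖_TV`. -/
noncomputable def distEq (N k : ℕ) (p t : ℝ) : ℝ :=
  ⨆ ξ : {ξ : Conf N // numParticles ξ = k},
    tvDist (fun ξ' => Pt N p t ξ.1 ξ') (statMeas N k p)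

/-- `T^{N,k}_mix(ε) = inf {t ≥ 0 : d^{N,k}(t) ≤ ε}`. -/
noncomputable def Tmix (N k : ℕ) (p ε : ℝ) : ℝ :=
  sInf {t : ℝ | 0 ≤ t ∧ distEq N k p t ≤ ε}

/-- The height function `h(ξ)(x) = Σ_{y=1}^x (2ξ(y) − 1)`, for `x ∈ {0,…,N}`. -/
def height {N : ℕ} (ξ : Conf N) (x : ℕ) : ℤ :=
  ∑ y ∈ Finset.univ.filter (fun y : Fin N => (y : ℕ) < x), (if ξ y then (1 : ℤ) else -1)

/-- Pointwise order on height functions. -/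
def heightLE {N : ℕ} (ξ ξ' : Conf N) : Prop := ∀ x ≤ N, height ξ x ≤ height ξ' x

/-- `ϱ = (√p − √q)²`. -/
noncomputable def rho (p : ℝ) : ℝ := (Real.sqrt p - Real.sqrt (1 - p)) ^ 2

/-- The spectral gap `gap_N = (√p − √q)² + 4√(pq)·sin²(π/(2N))`. -/
noncomputable def gapN (N : ℕ) (p : ℝ) : ℝ :=
  rho p + 4 * Real.sqrt (p * (1 - p)) * Real.sin (Real.pi / (2 * N)) ^ 2

/-- `a` solves the boundary value problem `√(pq)·Δa(x) = ϱ·a(x)` on `{1,…,N−1}`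
with `a(0) = 1` and `a(N) = λ^{(2k−N)/2}`, defining `a_{N,k}`. -/
def IsBVP (N k : ℕ) (p : ℝ) (a : ℕ → ℝ) : Prop :=
  a 0 = 1 ∧ a N = lam p ^ ((2 * (k : ℝ) - N) / 2) ∧
    ∀ x : ℕ, 1 ≤ x → x ≤ N - 1 →
      Real.sqrt (p * (1 - p)) * (a (x + 1) + a (x - 1) - 2 * a x) = rho p * a x

/-- `f^{(j)}_{N,k}(ζ) = Σ_{x=1}^{N-1} sin(jπx/N)·(λ^{ζ(x)/2} − a_{N,k}(x))/(λ−1)`,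
viewed as a function of the particle configuration via the height function. -/
noncomputable def eigenF (N : ℕ) (p : ℝ) (a : ℕ → ℝ) (j : ℕ) (ξ : Conf N) : ℝ :=
  ∑ x ∈ Finset.Icc 1 (N - 1),
    Real.sin ((j : ℝ) * Real.pi * x / N) *
      ((lam p ^ ((height ξ x : ℝ) / 2) - a x) / (lam p - 1))

/-- `f^{(0)}_{N,k}(ζ) = Σ_{x=1}^{N-1} (λ^{ζ(x)/2} − a_{N,k}(x))/(λ−1)`. -/
noncomputable def fZero (N : ℕ) (p : ℝ) (a : ℕ → ℝ) (ξ : Conf N) : ℝ :=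
  ∑ x ∈ Finset.Icc 1 (N - 1), (lam p ^ ((height ξ x : ℝ) / 2) - a x) / (lam p - 1)

/-- The maximal configuration `ξ^max` (particles on sites `1,…,k`);
its height function is `∧`. -/
def confMax (N k : ℕ) : Conf N := fun x => decide ((x : ℕ) < k)

/-- The minimal configuration `ξ^min` (particles on sites `N−k+1,…,N`);
its height function is `∨`. -/
def confMin (N k : ℕ) : Conf N := fun x => decide (N - k ≤ (x : ℕ))

/-- `π_{N,k}(ξ(x) = 1)` for the (0-based) site `x : Fin N`. -/
noncomputable def occProb (N k : ℕ) (p : ℝ) (x : Fin N) : ℝ :=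
  ∑ ξ ∈ Finset.univ.filter (fun ξ : Conf N => ξ x = true), statMeas N k p ξ

/-- `ℓ_N(ξ) = min {x ∈ {1,…,N} : ξ(x) = 1}`, the position of the leftmost particle. -/
noncomputable def leftPos {N : ℕ} (ξ : Conf N) : ℕ :=
  sInf {x | ∃ y : Fin N, ξ y = true ∧ x = (y : ℕ) + 1}

/-- `r_N(ξ) = max {x ∈ {1,…,N} : ξ(x) = 0}`, the position of the rightmost empty site. -/
noncomputable def rightEmpty {N : ℕ} (ξ : Conf N) : ℕ :=
  sSup {x | ∃ y : Fin N, ξ y = false ∧ x = (y : ℕ) + 1}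

/-- `Q₁(ξ)`: maximal length of a run of consecutive empty sites. -/
noncomputable def runEmpty {N : ℕ} (ξ : Conf N) : ℕ :=
  sSup {n | 1 ≤ n ∧ ∃ i, i + n ≤ N ∧
    ∀ y : Fin N, i ≤ (y : ℕ) → (y : ℕ) < i + n → ξ y = false}

/-- `Q₂(ξ)`: maximal length of a run of consecutive occupied sites. -/
noncomputable def runFull {N : ℕ} (ξ : Conf N) : ℕ :=
  sSup {n | 1 ≤ n ∧ ∃ i, i + n ≤ N ∧
    ∀ y : Fin N, i ≤ (y : ℕ) → (y : ℕ) < i + n → ξ y = true}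

/-- `Q(ξ) = max(Q₁(ξ), Q₂(ξ))`. -/
noncomputable def Qmax {N : ℕ} (ξ : Conf N) : ℕ := max (runEmpty ξ) (runFull ξ)

/-- `L_N(ζ) = max{x : ζ(x) = −x}` for a height function `ζ`. -/
noncomputable def LNh {N : ℕ} (ξ : Conf N) : ℕ :=
  sSup {x | x ≤ N ∧ height ξ x = -(x : ℤ)}

/-- `R_N(ζ) = min{x : ζ(x) = x − 2(N−k)}` for a height function `ζ`. -/
noncomputable def RNh (k : ℕ) {N : ℕ} (ξ : Conf N) : ℕ :=
  sInf {x | x ≤ N ∧ height ξ x = (x : ℤ) - 2 * ((N : ℤ) - k)}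

/-- `D_N(ζ) = max(|L_N(ζ) − (N−k)|, |R_N(ζ) − (N−k)|)`. -/
noncomputable def DNh (k : ℕ) {N : ℕ} (ξ : Conf N) : ℤ :=
  max |(LNh ξ : ℤ) - ((N : ℤ) - k)| |(RNh k ξ : ℤ) - ((N : ℤ) - k)|

/-- `H_ζ(x) = λ^{(N−k)/2}·(λ^{ζ(x)/2} − a_{N,k}(x))/(λ−1)`. -/
noncomputable def Hfun (N k : ℕ) (p : ℝ) (a : ℕ → ℝ) (ξ : Conf N) (x : ℕ) : ℝ :=
  lam p ^ (((N : ℝ) - k) / 2) * ((lam p ^ ((height ξ x : ℝ) / 2) - a x) / (lam p - 1))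

/-- Variance of `f` under the (probability vector) `μ`. -/
noncomputable def varOf {S : Type*} [Fintype S] (μ f : S → ℝ) : ℝ :=
  (∑ x, μ x * f x ^ 2) - (∑ x, μ x * f x) ^ 2

/-- Total variation distance between the pushforwards of `μ` and `ν` by `g`. -/
noncomputable def tvPush {S : Type*} [Fintype S] (μ ν : S → ℝ) (g : S → ℕ) : ℝ :=
  ⨆ A : Set ℕ,
    ((∑ x ∈ Finset.univ.filter (fun x => g x ∈ A), μ x) -
      ∑ x ∈ Finset.univ.filter (fun x => g x ∈ A), ν x)

/-- The scaling limit `ℓ_α(t)` of the (rescaled) position of the leftmost particle. -/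
noncomputable def ellAlpha (α t : ℝ) : ℝ :=
  if t ≤ α then 0
  else if (Real.sqrt α + Real.sqrt (1 - α)) ^ 2 ≤ t then 1 - α
  else (Real.sqrt t - Real.sqrt α) ^ 2

/-- The scaling limit `r_α(t)` of the (rescaled) position of the rightmost empty site. -/
noncomputable def rAlpha (α t : ℝ) : ℝ :=
  if t ≤ 1 - α then 1
  else if (Real.sqrt α + Real.sqrt (1 - α)) ^ 2 ≤ t then 1 - α
  else 1 - (Real.sqrt t - Real.sqrt (1 - α)) ^ 2

end Wasep

/-!
Write `c = λ`. The additive correction `a` cancels in `f⁰(ζ') - f⁰(ζ)`, which is therefore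
`Σ_x (c^{ζ'(x)/2} - c^{ζ(x)/2}) / (c - 1)`. Since `ζ'(x) = -x` up to `L = L_N(ζ')` and
`ζ'(x) = x - 2(N-k)` from `R = R_N(ζ')` on, while `ζ ≤ ζ'` and `ζ ≥ ∨`, the two height functions
agree outside `(L, R)`. Inside, `ζ'(x) - ζ(x) = 2n` with `n ≤ k`, so the summand is at most
`n·c^{ζ'(x)/2}`, and the two slopes of `ζ'` through `(L, -L)` and `(R, R - 2(N-k))` give
`ζ'(x) + (N - k) ≤ R - L ≤ 2 D_N(ζ')`.
-/

lemma pow_sub_one_le_mul_sub_one {R : Type*} [CommRing R] [LinearOrder R] [IsStrictOrderedRing R]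
    {c : R} (hc : 1 ≤ c) (n : ℕ) : c ^ n - 1 ≤ n * c ^ n * (c - 1) := by
  rw [← geom_sum_mul]
  refine mul_le_mul_of_nonneg_right ?_ (sub_nonneg.2 hc)
  calc ∑ i ∈ Finset.range n, c ^ i ≤ ∑ _i ∈ Finset.range n, c ^ n :=
        Finset.sum_le_sum fun i hi => pow_le_pow_right₀ hc (Finset.mem_range.1 hi).le
    _ = n * c ^ n := by rw [Finset.sum_const, Finset.card_range, nsmul_eq_mul]

lemma rpow_add_natCast_sub_rpow_le {c : ℝ} (hc : 1 ≤ c) (v : ℝ) (n : ℕ) :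
    c ^ (v + n) - c ^ v ≤ n * (c - 1) * c ^ (v + n) := by
  have hc0 : 0 < c := by linarith
  rw [Real.rpow_add hc0, Real.rpow_natCast]
  have := mul_le_mul_of_nonneg_left (pow_sub_one_le_mul_sub_one hc n)
    (Real.rpow_nonneg hc0.le v)
  linarith

lemma rpow_half_sub_div_mul_le {c : ℝ} (hc : 1 < c) {v w m D : ℤ} {k : ℕ}
    (hvw : v ≤ w) (heven : Even (w - v)) (hk : w - v ≤ 2 * k) (hD : w + m ≤ 2 * D) :
    (c ^ ((w : ℝ) / 2) - c ^ ((v : ℝ) / 2)) / (c - 1) * c ^ ((m : ℝ) / 2) ≤ k * c ^ D := by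
  obtain ⟨n, hn⟩ := heven
  lift n to ℕ using (by omega)
  have hc0 : 0 < c := by linarith
  have hw : (w : ℝ) / 2 = (v : ℝ) / 2 + n := by
    rw [show w = v + 2 * (n : ℤ) by omega]; push_cast; ring
  have hnk : (n : ℝ) ≤ k := by exact_mod_cast (show (n : ℤ) ≤ k by omega)
  have hexp : c ^ ((w : ℝ) / 2) * c ^ ((m : ℝ) / 2) ≤ c ^ D := by
    rw [← Real.rpow_add hc0, ← Real.rpow_intCast]
    have hD' : (w : ℝ) + m ≤ 2 * D := by exact_mod_cast hD
    exact Real.rpow_le_rpow_of_exponent_le hc.le (by linarith)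
  have hdiff : (c ^ ((w : ℝ) / 2) - c ^ ((v : ℝ) / 2)) / (c - 1) ≤ n * c ^ ((w : ℝ) / 2) := by
    rw [div_le_iff₀ (by linarith), hw]
    linarith [rpow_add_natCast_sub_rpow_le hc.le ((v : ℝ) / 2) n]
  calc (c ^ ((w : ℝ) / 2) - c ^ ((v : ℝ) / 2)) / (c - 1) * c ^ ((m : ℝ) / 2)
      ≤ n * c ^ ((w : ℝ) / 2) * c ^ ((m : ℝ) / 2) := by gcongr
    _ ≤ k * c ^ D := by
      rw [mul_assoc]
      exact mul_le_mul hnk hexp (by positivity) (by positivity)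

namespace Wasep

lemma one_lt_lam {p : ℝ} (hp : p ∈ Set.Ioo (1 / 2 : ℝ) 1) : 1 < lam p := by
  rw [lam, one_lt_div (by linarith [hp.2])]
  linarith [hp.1]

lemma fZero_sub_fZero {N : ℕ} (p : ℝ) (a : ℕ → ℝ) (ξ ξ' : Conf N) :
    fZero N p a ξ' - fZero N p a ξ = ∑ x ∈ Finset.Icc 1 (N - 1),
      (lam p ^ ((height ξ' x : ℝ) / 2) - lam p ^ ((height ξ x : ℝ) / 2)) / (lam p - 1) := by
  rw [fZero, fZero, ← Finset.sum_sub_distrib]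
  exact Finset.sum_congr rfl fun x _ => by ring

section Height

variable {N : ℕ} (ξ : Conf N)

@[simp]
lemma height_zero : height ξ 0 = 0 := by
  simp [height]

lemma height_succ {x : ℕ} (hx : x < N) :
    height ξ (x + 1) = height ξ x + if ξ ⟨x, hx⟩ then 1 else -1 := by
  have hinsert : (Finset.univ.filter fun y : Fin N => (y : ℕ) < x + 1) =
      insert ⟨x, hx⟩ (Finset.univ.filter fun y : Fin N => (y : ℕ) < x) := by
    ext y
    simp only [Order.lt_add_one_iff, Finset.mem_filter, Finset.mem_univ, true_and,
      Finset.mem_insert, Fin.ext_iff]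
    omega
  rw [height, height, hinsert, Finset.sum_insert (by simp), add_comm]

lemma abs_height_sub_le {x y : ℕ} (hxy : x ≤ y) (hy : y ≤ N) :
    |height ξ y - height ξ x| ≤ y - x := by
  induction y, hxy using Nat.le_induction with
  | base => simp
  | succ n hn ih =>
    have h := abs_le.1 (ih (by omega))
    rw [height_succ ξ (by omega), abs_le]
    push_cast
    split_ifs <;> constructor <;> omega

lemma height_last : height ξ N = 2 * (numParticles ξ : ℤ) - N := by
  have hsign : ∀ y : Fin N, (if ξ y then (1 : ℤ) else -1) = 2 * (if ξ y then 1 else 0) - 1 := by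
    intro y; cases ξ y <;> simp
  rw [height, Finset.filter_true_of_mem fun y _ => y.isLt, Finset.sum_congr rfl fun y _ => hsign y,
    Finset.sum_sub_distrib, ← Finset.mul_sum, Finset.sum_boole, numParticles]
  simp

lemma neg_le_height {x : ℕ} (hx : x ≤ N) : -(x : ℤ) ≤ height ξ x := by
  have := abs_le.1 (abs_height_sub_le ξ (Nat.zero_le x) hx)
  simp only [CharP.cast_eq_zero, sub_zero, height_zero] at this
  omega

lemma height_le_two_mul_sub {x : ℕ} (hx : x ≤ N) :
    height ξ x ≤ 2 * (numParticles ξ : ℤ) - x := by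
  have := abs_le.1 (abs_height_sub_le ξ hx le_rfl)
  rw [height_last] at this
  omega

lemma even_height_sub (ξ' : Conf N) (x : ℕ) : Even (height ξ' x - height ξ x) := by
  rw [height, height, ← Finset.sum_sub_distrib]
  exact Finset.even_sum _ fun y _ => by cases ξ y <;> cases ξ' y <;> simp

lemma LNh_spec : LNh ξ ≤ N ∧ height ξ (LNh ξ) = -(LNh ξ : ℤ) :=
  Nat.sSup_mem (s := {x | x ≤ N ∧ height ξ x = -(x : ℤ)}) ⟨0, by simp⟩ ⟨N, fun _ hx => hx.1⟩

lemma RNh_spec {k : ℕ} (hξ : numParticles ξ = k) :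
    RNh k ξ ≤ N ∧ height ξ (RNh k ξ) = (RNh k ξ : ℤ) - 2 * ((N : ℤ) - k) :=
  Nat.sInf_mem (s := {x | x ≤ N ∧ height ξ x = (x : ℤ) - 2 * ((N : ℤ) - k)})
    ⟨N, le_rfl, by rw [height_last, hξ]; ring⟩

end Height

section Order

variable {N k : ℕ} {ξ ξ' : Conf N}

lemma height_eq_of_le_LNh (hle : heightLE ξ ξ') {x : ℕ} (hx : x ≤ LNh ξ') :
    height ξ x = height ξ' x := by
  obtain ⟨hL, hLval⟩ := LNh_spec ξ'
  have h' := abs_le.1 (abs_height_sub_le ξ' hx hL)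
  have := neg_le_height ξ (hx.trans hL)
  have := hle x (hx.trans hL)
  omega

lemma height_eq_of_RNh_le (hξ : numParticles ξ = k) (hξ' : numParticles ξ' = k)
    (hle : heightLE ξ ξ') {x : ℕ} (hx : RNh k ξ' ≤ x) (hxN : x ≤ N) :
    height ξ x = height ξ' x := by
  obtain ⟨-, hRval⟩ := RNh_spec ξ' hξ'
  have h' := abs_le.1 (abs_height_sub_le ξ' hx hxN)
  have h := abs_le.1 (abs_height_sub_le ξ hxN le_rfl)
  rw [height_last, hξ] at h
  have := hle x hxN
  omega

lemma height_add_le_two_mul_DNh (hξ' : numParticles ξ' = k) {x : ℕ}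
    (hL : LNh ξ' ≤ x) (hR : x ≤ RNh k ξ') :
    height ξ' x + ((N : ℤ) - k) ≤ 2 * DNh k ξ' := by
  obtain ⟨hRN, hRval⟩ := RNh_spec ξ' hξ'
  have hLval := (LNh_spec ξ').2
  have hleft := abs_le.1 (abs_height_sub_le ξ' hL (hR.trans hRN))
  have hright := abs_le.1 (abs_height_sub_le ξ' hR hRN)
  have hDL := neg_abs_le ((LNh ξ' : ℤ) - ((N : ℤ) - k))
  have hDR := le_abs_self ((RNh k ξ' : ℤ) - ((N : ℤ) - k))
  have := le_max_left |(LNh ξ' : ℤ) - ((N : ℤ) - k)| |(RNh k ξ' : ℤ) - ((N : ℤ) - k)|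
  have := le_max_right |(LNh ξ' : ℤ) - ((N : ℤ) - k)| |(RNh k ξ' : ℤ) - ((N : ℤ) - k)|
  rw [DNh]
  omega

lemma rpow_height_sub_div_mul_le {c : ℝ} (hc : 1 < c) (hξ : numParticles ξ = k)
    (hξ' : numParticles ξ' = k) (hle : heightLE ξ ξ') {x : ℕ} (hx : x ≤ N) :
    (c ^ ((height ξ' x : ℝ) / 2) - c ^ ((height ξ x : ℝ) / 2)) / (c - 1) *
      c ^ (((N : ℝ) - k) / 2) ≤ k * c ^ DNh k ξ' := by
  by_cases hmid : LNh ξ' < x ∧ x < RNh k ξ'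
  · have hk : height ξ' x - height ξ x ≤ 2 * k := by
      have := height_le_two_mul_sub ξ' hx
      have := neg_le_height ξ hx
      omega
    have := rpow_half_sub_div_mul_le hc (hle x hx) (even_height_sub ξ ξ' x) hk
      (height_add_le_two_mul_DNh (ξ' := ξ') hξ' hmid.1.le hmid.2.le)
    exact_mod_cast this
  · have heq : height ξ x = height ξ' x := by
      rcases not_and_or.1 hmid with hL | hR
      · exact height_eq_of_le_LNh hle (not_lt.1 hL)
      · exact height_eq_of_RNh_le hξ hξ' hle (not_lt.1 hR) hx
    rw [heq, sub_self, zero_div, zero_mul]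
    positivity

end Order

theorem fZero_difference_bound_general
    (N k : ℕ) (p : ℝ)
    (hp : p ∈ Set.Ioo (1 / 2 : ℝ) 1)
    (a : ℕ → ℝ)
    (ξ ξ' : Conf N) (hξ : numParticles ξ = k) (hξ' : numParticles ξ' = k)
    (hle : heightLE ξ ξ') :
    (fZero N p a ξ' - fZero N p a ξ) * lam p ^ (((N : ℝ) - k) / 2) ≤
      (N : ℝ) * k * lam p ^ DNh k ξ' := by
  have hc := one_lt_lam hp
  calc (fZero N p a ξ' - fZero N p a ξ) * lam p ^ (((N : ℝ) - k) / 2)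
      = ∑ x ∈ Finset.Icc 1 (N - 1),
          (lam p ^ ((height ξ' x : ℝ) / 2) - lam p ^ ((height ξ x : ℝ) / 2)) / (lam p - 1) *
            lam p ^ (((N : ℝ) - k) / 2) := by
        rw [fZero_sub_fZero, Finset.sum_mul]
    _ ≤ ∑ _x ∈ Finset.Icc 1 (N - 1), (k : ℝ) * lam p ^ DNh k ξ' :=
        Finset.sum_le_sum fun x hx =>
          rpow_height_sub_div_mul_le hc hξ hξ' hle (by have := Finset.mem_Icc.1 hx; omega)
    _ = ((N - 1 : ℕ) : ℝ) * (k * lam p ^ DNh k ξ') := by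
        rw [Finset.sum_const, Nat.card_Icc, nsmul_eq_mul, Nat.add_sub_cancel]
    _ ≤ N * k * lam p ^ DNh k ξ' := by
        rw [← mul_assoc]
        have : 0 ≤ lam p ^ DNh k ξ' := zpow_nonneg (by linarith) _
        gcongr
        exact_mod_cast Nat.sub_le N 1

/-- Bound on differences of `f^{(0)}_{N,k}` over ordered pairs, in units of the
minimal increment `λ^{(k−N)/2}`:
`(f⁰(ζ') − f⁰(ζ))·λ^{(N−k)/2} ≤ N·k·λ^{D_N(ζ')}`. -/
theorem fZero_difference_bound
    (N k : ℕ) (p : ℝ) (hN : 2 ≤ N) (hk : 1 ≤ k ∧ k < N)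
    (hp : p ∈ Set.Ioo (1 / 2 : ℝ) 1)
    (a : ℕ → ℝ) (ha : IsBVP N k p a)
    (ξ ξ' : Conf N) (hξ : numParticles ξ = k) (hξ' : numParticles ξ' = k)
    (hle : heightLE ξ ξ') :
    (fZero N p a ξ' - fZero N p a ξ) * lam p ^ (((N : ℝ) - k) / 2) ≤
      (N : ℝ) * k * lam p ^ DNh k ξ' :=
  fZero_difference_bound_general N k p hp a ξ ξ' hξ hξ' hle

end Wasep
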